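/- arXiv:1403.7488 — 4 statements merged into one kernel-verified Lean document; each statement's English description precedes it below -/
import Mathlib

section
/- For a finite topological space, the notions of connectedness and path-connectedness agree: a finite topological space is connected if and only if it is path-connected. -/
/-- A finite topological space is connected iff it is
path-connected. -/
theorem stmt_9 {X : Type*} [Finite X] [TopologicalSpace X] :
    ConnectedSpace X ↔ PathConnectedSpace X :=
  -- `X` is locally path-connected via `Finite.toAlexandrovDiscrete` and
  -- `AlexandrovDiscrete.locallyPathConnectedSpace`.
  pathConnectedSpace_iff_connectedSpace.symm
end

section
/- Let X and Y be finite topological spaces and let f, g : X → Y be continuous maps with f ≤ g pointwise (i.e. f(x) ≤ g(x) in the specialization preorder of Y for all x). Then f and g are homotopic. -/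
/-!
The homotopy is `f` at time `0` and `g` at every later time. It is continuous because every open
set containing `f x` also contains `g x`, so the preimage of an open `O` is
`{t ≠ 0} ×ˢ g⁻¹ O ∪ univ ×ˢ f⁻¹ O`.
-/

open Topology

theorem continuous_ite_mem_of_specializes {Z X Y : Type*} [TopologicalSpace Z]
    [TopologicalSpace X] [TopologicalSpace Y] {C : Set Z} [DecidablePred (· ∈ C)]
    (hC : IsClosed C) {f g : X → Y} (hf : Continuous f) (hg : Continuous g)
    (hgf : ∀ x, g x ⤳ f x) :
    Continuous fun p : Z × X => if p.1 ∈ C then f p.2 else g p.2 := by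
  refine continuous_def.2 fun O hO => ?_
  have hpre : (fun p : Z × X => if p.1 ∈ C then f p.2 else g p.2) ⁻¹' O =
      Cᶜ ×ˢ (g ⁻¹' O) ∪ Set.univ ×ˢ (f ⁻¹' O) := by
    ext ⟨z, x⟩
    have hfg : f x ∈ O → g x ∈ O := specializes_iff_forall_open.1 (hgf x) O hO
    by_cases hz : z ∈ C
    · simp [hz]
    · simpa [hz] using hfg
  rw [hpre]
  exact (hC.isOpen_compl.prod (hO.preimage hg)).union (isOpen_univ.prod (hO.preimage hf))

open Classical in
noncomputable def ContinuousMap.Homotopy.ofSpecializes {X Y : Type*} [TopologicalSpace X]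
    [TopologicalSpace Y] (f g : C(X, Y)) (hgf : ∀ x, g x ⤳ f x) : f.Homotopy g where
  toFun p := if p.1 ∈ ({0} : Set unitInterval) then f p.2 else g p.2
  continuous_toFun :=
    continuous_ite_mem_of_specializes isClosed_singleton f.continuous g.continuous hgf
  map_zero_left x := by simp
  map_one_left x := by simp

theorem stmt_10_general {X Y : Type*}
    [TopologicalSpace X] [TopologicalSpace Y] (f g : C(X, Y))
    (h : ∀ x : X, ∀ O : Set Y, IsOpen O → f x ∈ O → g x ∈ O) :
    ContinuousMap.Homotopic f g :=
  ⟨.ofSpecializes f g fun x => specializes_iff_forall_open.2 fun O hO => h x O hO⟩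

/-- Two continuous maps between finite topological spaces that are
pointwise comparable for the specialization preorder are homotopic. -/
theorem stmt_10 {X Y : Type*} [Finite X] [Finite Y]
    [TopologicalSpace X] [TopologicalSpace Y] (f g : C(X, Y))
    (h : ∀ x : X, ∀ O : Set Y, IsOpen O → f x ∈ O → g x ∈ O) :
    ContinuousMap.Homotopic f g :=
  stmt_10_general f g h
end

section
/- Let X be a finite topological space and x a linear point of X, i.e. there exists y > x such that every z > x satisfies z ≥ y. Then X is homotopy equivalent to X \ {x} (with the subspace topology). -/
/-!
Collapsing the up beat point `x` onto a point `t ≠ x` lying above it and below every other point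
above `x` is monotone for the specialization order, hence continuous on a finite space, and it
retracts `X` onto `X \ {x}`. Composed with the inclusion it lies above the identity, and maps
comparable in the specialization order are homotopic through the homotopy that jumps at time `1`.
-/

/-- The specialization preorder of a topological space. -/
def specLE {X : Type*} [TopologicalSpace X] (x y : X) : Prop :=
  ∀ O : Set X, IsOpen O → x ∈ O → y ∈ O

/-- Strict specialization order. -/
def specLT {X : Type*} [TopologicalSpace X] (x y : X) : Prop :=
  specLE x y ∧ ¬ specLE y x

open Topology ContinuousMap

section Specialization

variable {X Y : Type*} [TopologicalSpace X] [TopologicalSpace Y]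

theorem specLE_iff_specializes {x y : X} : specLE x y ↔ y ⤳ x :=
  specializes_iff_forall_open.symm

theorem continuous_of_forall_specializes [AlexandrovDiscrete X] {f : X → Y}
    (hf : ∀ a b, a ⤳ b → f a ⤳ f b) : Continuous f :=
  continuous_def.2 fun _ hU ↦ isOpen_iff_forall_specializes.2 fun a b hab hb ↦
    (hf a b hab).mem_open hU hb

theorem ContinuousMap.Homotopic.of_forall_specializes {f g : C(X, Y)} (h : ∀ w, f w ⤳ g w) :
    f.Homotopic g := by
  classical
  let s : Set (unitInterval × X) := {p | p.1 = 1}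
  have hs : IsClosed s := isClosed_eq continuous_fst continuous_const
  refine ⟨⟨⟨s.piecewise (g ∘ Prod.snd) (f ∘ Prod.snd), hs.continuous_piecewise_of_specializes
    (g.continuous.comp continuous_snd) (f.continuous.comp continuous_snd) fun p ↦ h p.2⟩,
    fun w ↦ ?_, fun w ↦ ?_⟩⟩
  all_goals simp [s, Set.piecewise]

/-- In a space that is not T₀, a point indistinguishable from `x` can serve as `t`. -/
theorem exists_collapse_target {x y : X} (hyx : y ⤳ x) (hxy : ¬x ⤳ y)
    (hy : ∀ z, z ⤳ x → ¬x ⤳ z → z ⤳ y) :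
    ∃ t, t ≠ x ∧ t ⤳ x ∧ ∀ z ≠ x, z ⤳ x → z ⤳ t := by
  by_cases htwin : ∃ t ≠ x, t ⤳ x ∧ x ⤳ t
  · obtain ⟨t, htx, ht, hxt⟩ := htwin
    exact ⟨t, htx, ht, fun z _ hz ↦ hz.trans hxt⟩
  · push Not at htwin
    exact ⟨y, fun h ↦ hxy (h ▸ specializes_rfl), hyx, fun z hzx hz ↦ hy z hz (htwin z hzx hz)⟩

section Collapse

variable [AlexandrovDiscrete X] {x t : X}

open Classical in
noncomputable def collapse (hne : t ≠ x) (htx : t ⤳ x) (ht : ∀ z ≠ x, z ⤳ x → z ⤳ t) :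
    C(X, {z : X // z ≠ x}) where
  toFun w := if hw : w = x then ⟨t, hne⟩ else ⟨w, hw⟩
  continuous_toFun := by
    refine continuous_of_forall_specializes fun a b hab ↦ ?_
    rw [subtype_specializes_iff]
    by_cases ha : a = x <;> by_cases hb : b = x <;> simp only [ha, hb, dite_true, dite_false]
    · exact specializes_rfl
    · exact htx.trans (ha ▸ hab)
    · exact ht a ha (hb ▸ hab)
    · exact hab

noncomputable def collapseHomotopyEquiv (hne : t ≠ x) (htx : t ⤳ x)
    (ht : ∀ z ≠ x, z ⤳ x → z ⤳ t) :
    X ≃ₕ {z : X // z ≠ x} where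
  toFun := collapse hne htx ht
  invFun := ⟨Subtype.val, continuous_subtype_val⟩
  left_inv := .of_forall_specializes fun w ↦ by
    by_cases hw : w = x
    · subst hw; simpa [collapse] using htx
    · simpa [collapse, hw] using specializes_rfl
  right_inv := .of_forall_specializes fun ⟨w, hw⟩ ↦ by
    simpa [collapse, hw] using specializes_rfl

end Collapse

end Specialization

/-- Removing a linear point (up beat point) from a finite
topological space does not change its homotopy type. -/
theorem stmt_12 {X : Type*} [Finite X] [TopologicalSpace X] (x : X)
    (hx : ∃ y : X, specLT x y ∧ ∀ z : X, specLT x z → specLE y z) :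
    Nonempty (ContinuousMap.HomotopyEquiv X {z : X // z ≠ x}) := by
  simp only [specLT, specLE_iff_specializes] at hx
  obtain ⟨y, ⟨hyx, hxy⟩, hy⟩ := hx
  obtain ⟨t, hne, htx, ht⟩ := exists_collapse_target hyx hxy fun z hzx hxz ↦ hy z ⟨hzx, hxz⟩
  exact ⟨collapseHomotopyEquiv hne htx ht⟩
end

section
/- Let X, Y, Z, W be nonempty finite topological spaces on disjoint finite sets whose unions agree: X ⊔ Y = Z ⊔ W as topological spaces, where the join condition holds (every point of X is strictly below every point of Y, and every point of Z strictly below every point of W, in the specialization preorder of the union). If X ∩ Z is a proper nonempty subset of both X and Z, one obtains a contradiction; consequently the decomposition of a finite topological space as a join of join-indecomposable spaces is unique. -/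
theorem specLT.not_specLT {α : Type*} [TopologicalSpace α] {a b : α} (h : specLT a b) :
    ¬ specLT b a :=
  fun h' => h.2 h'.1

theorem stmt_16_general {E : Type*} [TopologicalSpace E]
    (X Y Z W : Set E)
    (hXY : X ∪ Y = Set.univ)
    (hZW : Z ∪ W = Set.univ)
    (hjoin₁ : ∀ a ∈ X, ∀ b ∈ Y, specLT a b)
    (hjoin₂ : ∀ c ∈ Z, ∀ d ∈ W, specLT c d)
    (h₁ : X ∩ Z ≠ X) (h₂ : X ∩ Z ≠ Z) :
    False := by
  obtain ⟨x, hxX, hxZ⟩ := Set.not_subset.mp fun h => h₁ (Set.inter_eq_left.mpr h)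
  obtain ⟨z, hzZ, hzX⟩ := Set.not_subset.mp fun h => h₂ (Set.inter_eq_right.mpr h)
  have hxW : x ∈ W := (Set.eq_univ_iff_forall.mp hZW x).resolve_left hxZ
  have hzY : z ∈ Y := (Set.eq_univ_iff_forall.mp hXY z).resolve_left hzX
  -- `x` lies in the bottom factor of one decomposition and the top of the other, `z` the reverse.
  exact (hjoin₁ x hxX z hzY).not_specLT (hjoin₂ z hzZ x hxW)

/-- if a finite topological space decomposes in two ways as a
join, `X ≻ Y = Z ≻ W`, then the first factors cannot overlap properly: if
`X ∩ Z` is a nonempty proper subset of both `X` and `Z`, we get a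
contradiction. (This is the key step for the uniqueness of the decomposition
of a finite space as a join of join-indecomposable spaces.) -/
theorem stmt_16 {E : Type*} [Finite E] [TopologicalSpace E]
    (X Y Z W : Set E)
    (hXY : X ∪ Y = Set.univ) (hdXY : Disjoint X Y)
    (hZW : Z ∪ W = Set.univ) (hdZW : Disjoint Z W)
    (hX : X.Nonempty) (hY : Y.Nonempty) (hZ : Z.Nonempty) (hW : W.Nonempty)
    (hjoin₁ : ∀ a ∈ X, ∀ b ∈ Y, specLT a b)
    (hjoin₂ : ∀ c ∈ Z, ∀ d ∈ W, specLT c d)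
    (hne : (X ∩ Z).Nonempty) (h₁ : X ∩ Z ≠ X) (h₂ : X ∩ Z ≠ Z) :
    False :=
  stmt_16_general X Y Z W hXY hZW hjoin₁ hjoin₂ h₁ h₂
end
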